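/- arXiv:2112.06687 — 2 statements merged into one kernel-verified Lean document; each statement's English description precedes it below -/
import Mathlib

section
/- Let $H$ be a real Hilbert space with inner product $\langle\!\langle \cdot, \cdot \rangle\!\rangle$ and induced norm $\||\cdot\||$. Let $u, u_H, u_h \in H$ and suppose there is a Galerkin-type relation: $\langle\!\langle u - u_h, v \rangle\!\rangle + R(v) = 0$ for $v = u_h - u_H$, where the nonlinear remainder satisfies $|R(u_h - u_H)| \le \varepsilon \,\||u - u_h\|| \,\||u_h - u_H\||$ for some $0 < \varepsilon < 1$. Then $\||u - u_h\||^2 + \||u_h - u_H\||^2 \le \frac{1}{1-\varepsilon}\,\||u - u_H\||^2$. -/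
open scoped RealInnerProductSpace

/-- Abstract quasi-orthogonality (perturbed Pythagoras identity). -/
theorem stmt_5 {H : Type*} [NormedAddCommGroup H] [InnerProductSpace ℝ H]
    (u uH uh : H) (R : H → ℝ) (ε : ℝ) (hε0 : 0 < ε) (hε1 : ε < 1)
    (hgal : ⟪u - uh, uh - uH⟫ + R (uh - uH) = 0)
    (hR : |R (uh - uH)| ≤ ε * ‖u - uh‖ * ‖uh - uH‖) :
    ‖u - uh‖ ^ 2 + ‖uh - uH‖ ^ 2 ≤ (1 / (1 - ε)) * ‖u - uH‖ ^ 2 := by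
  have hexp : ‖u - uH‖ ^ 2 = ‖u - uh‖ ^ 2 + 2 * ⟪u - uh, uh - uH⟫ + ‖uh - uH‖ ^ 2 := by
    have : u - uH = (u - uh) + (uh - uH) := by abel
    rw [this, @norm_add_sq_real]
  have hinner : ⟪u - uh, uh - uH⟫ = -R (uh - uH) := by linarith
  have habs := abs_le.mp hR
  have h1e : 0 < 1 - ε := by linarith
  rw [div_mul_eq_mul_div, le_div_iff₀ h1e]
  nlinarith [sq_nonneg (‖u - uh‖ - ‖uh - uH‖), norm_nonneg (u - uh), norm_nonneg (uh - uH)]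
end

section
/- Let $H$ be a real Hilbert space, $X \subseteq H$ a closed subspace, $a(\cdot,\cdot)$ a continuous, symmetric, coercive bilinear form on $H$, and for $w \in H$ let $b_w(z, v)$ be a bilinear form with $b_w(v,v) \ge 0$ for all $v$. Let $z_X[u], z_X[w] \in X$ solve $a(z_X[u], v) + b_u(z_X[u], v) = G(v)$ and $a(z_X[w], v) + b_w(z_X[w], v) = G(v)$ for all $v \in X$, for a fixed $G \in H^*$. If $|b_u(z,v) - b_w(z,v)| \le L(u,w)\,\|z\|\,\|v\|$ for all $z, v \in X$ and the coercivity constant of $a$ is $\mu > 0$, then $\|z_X[u] - z_X[w]\| \le \mu^{-1} L(u,w)\, \|z_X[u]\|$. -/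
/-- Abstract stability of the linearized dual problem with respect to
perturbation of its coefficient (core of Lemma 4.1). -/
theorem stmt_13 {H : Type*} [NormedAddCommGroup H] [InnerProductSpace ℝ H] [CompleteSpace H]
    (X : Submodule ℝ H) (hX : IsClosed (X : Set H))
    (a bu bw : H →ₗ[ℝ] H →ₗ[ℝ] ℝ) (M μ L : ℝ) (hμ : 0 < μ)
    (ha_symm : ∀ z v : H, a z v = a v z)
    (ha_cont : ∀ z v : H, |a z v| ≤ M * ‖z‖ * ‖v‖)
    (ha_coer : ∀ v : H, μ * ‖v‖ ^ 2 ≤ a v v)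
    (hbu_nn : ∀ v : H, 0 ≤ bu v v) (hbw_nn : ∀ v : H, 0 ≤ bw v v)
    (G : H →L[ℝ] ℝ) (zu zw : H) (hzu : zu ∈ X) (hzw : zw ∈ X)
    (hequ : ∀ v ∈ X, a zu v + bu zu v = G v)
    (heqw : ∀ v ∈ X, a zw v + bw zw v = G v)
    (hpert : ∀ z ∈ X, ∀ v ∈ X, |bu z v - bw z v| ≤ L * ‖z‖ * ‖v‖) :
    ‖zu - zw‖ ≤ μ⁻¹ * L * ‖zu‖ := by
  set δ := zu - zw with hδ
  have hδX : δ ∈ X := X.sub_mem hzu hzw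
  -- subtract the equations tested with δ
  have h1 : a zu δ + bu zu δ = a zw δ + bw zw δ := by
    rw [hequ δ hδX, heqw δ hδX]
  have key : a δ δ + bw δ δ = -(bu zu δ - bw zu δ) := by
    have : a δ δ = a zu δ - a zw δ := by
      simp only [hδ, map_sub, LinearMap.sub_apply]; ring
    have hb : bw δ δ = bw zu δ - bw zw δ := by
      simp only [hδ, map_sub, LinearMap.sub_apply]; ring
    rw [this, hb]
    linarith
  have hbd : |bu zu δ - bw zu δ| ≤ L * ‖zu‖ * ‖δ‖ := hpert zu hzu δ hδX
  have h2 : μ * ‖δ‖ ^ 2 ≤ L * ‖zu‖ * ‖δ‖ := by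
    have := ha_coer δ
    have := hbw_nn δ
    have := neg_le_abs (bu zu δ - bw zu δ)
    linarith
  have hLzu : 0 ≤ L * ‖zu‖ := by
    rcases eq_or_ne zu 0 with h | h
    · simp [h]
    · have hn : 0 < ‖zu‖ := norm_pos_iff.mpr h
      nlinarith [hpert zu hzu zu hzu, abs_nonneg (bu zu zu - bw zu zu)]
  rcases eq_or_lt_of_le (norm_nonneg δ) with h0 | h0
  · rw [← h0, mul_assoc]
    exact mul_nonneg (by positivity) hLzu
  · have hkey : μ * ‖δ‖ ≤ L * ‖zu‖ := by nlinarith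
    rw [mul_assoc, inv_mul_eq_div, le_div_iff₀ hμ]
    linarith [mul_comm ‖δ‖ μ]
end
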